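/- arXiv:1709.03429 — 6 statements merged into one kernel-verified Lean document; each statement's English description precedes it below -/
import Mathlib

section
/- For an event y ∈ ℝ⁴ and an event x ∈ ℝ⁴, there exists a future-pointing timelike vector u with (x − y) · u > 0 if and only if x does not lie in the closed backward light cone of y. -/
/-!
Write `v = x - y`. If `v` lies in the closed past cone, it pairs non-positively with every
future-pointing causal vector: by Cauchy–Schwarz the spatial part of `v ⬝ u` is bounded by
`|v⁰| u⁰ = -v⁰ u⁰`. Conversely, if `v⁰ > 0` the unit time vector works, and if `v` is spacelike
with spatial length `r > |v⁰|`, a future-pointing timelike `u` that leans against the spatial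
direction of `v` works.
-/

noncomputable section

abbrev M4 : Type := Fin 4 → ℝ

/-- Minkowski inner product with signature (+,-,-,-). -/
def mdot (x y : M4) : ℝ := x 0 * y 0 - x 1 * y 1 - x 2 * y 2 - x 3 * y 3

/-- `later x y`: x is not in the closed backward light cone of y. -/
def later (x y : M4) : Prop := ¬ (mdot (x - y) (x - y) ≥ 0 ∧ x 0 - y 0 ≤ 0)

/-- Pointwise posteriority for sets. -/
def setLater (R S : Set M4) : Prop := ∀ x ∈ R, ∀ y ∈ S, later x y

/-- The string with apex x and direction e. -/
def mstring (x e : M4) : Set M4 := {z | ∃ s : ℝ, 0 ≤ s ∧ z = x + s • e}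

theorem mdot_nonpos_of_past_of_future {v u : M4} (hvv : 0 ≤ mdot v v) (hv0 : v 0 ≤ 0)
    (huu : 0 ≤ mdot u u) (hu0 : 0 ≤ u 0) : mdot v u ≤ 0 := by
  unfold mdot at *
  set s := v 1 * u 1 + v 2 * u 2 + v 3 * u 3 with hs_def
  have cauchy_schwarz : s ^ 2 ≤ (v 1 ^ 2 + v 2 ^ 2 + v 3 ^ 2) * (u 1 ^ 2 + u 2 ^ 2 + u 3 ^ 2) := by
    nlinarith [sq_nonneg (v 1 * u 2 - v 2 * u 1), sq_nonneg (v 1 * u 3 - v 3 * u 1),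
      sq_nonneg (v 2 * u 3 - v 3 * u 2)]
  have hs : s ^ 2 ≤ (-(v 0 * u 0)) ^ 2 := by
    calc s ^ 2 ≤ (v 1 ^ 2 + v 2 ^ 2 + v 3 ^ 2) * (u 1 ^ 2 + u 2 ^ 2 + u 3 ^ 2) := cauchy_schwarz
      _ ≤ v 0 ^ 2 * u 0 ^ 2 := by gcongr <;> nlinarith
      _ = (-(v 0 * u 0)) ^ 2 := by ring
  obtain ⟨hs_lower, -⟩ := abs_le_of_sq_le_sq' hs (by nlinarith)
  linarith

theorem exists_future_timelike_mdot_pos_of_time_pos {v : M4} (hv0 : 0 < v 0) :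
    ∃ u : M4, mdot u u > 0 ∧ u 0 > 0 ∧ mdot v u > 0 :=
  ⟨![1, 0, 0, 0], by simp [mdot], by simp, by simpa [mdot]⟩

theorem exists_future_timelike_mdot_pos_of_spacelike {v : M4} (hvv : mdot v v < 0) :
    ∃ u : M4, mdot u u > 0 ∧ u 0 > 0 ∧ mdot v u > 0 := by
  set a := v 0
  set q := v 1 ^ 2 + v 2 ^ 2 + v 3 ^ 2
  set r := √q
  have haq : a ^ 2 < q := by unfold mdot at hvv; nlinarith
  have hr : r ^ 2 = q := Real.sq_sqrt (by positivity)
  have har : a < r := Real.lt_sqrt_of_sq_lt haq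
  have har' : -a < r := Real.lt_sqrt_of_sq_lt (by simpa using haq)
  have hr0 : 0 < r := by linarith
  -- `(r, -v⃗)` is null with `v ⬝ u = r (r + a) > 0`; shrinking its spatial part by the factor
  -- `(r - a) / 2r` makes it timelike while keeping `v ⬝ u > 0`.
  set u : M4 := ![2 * r ^ 2, -(r - a) * v 1, -(r - a) * v 2, -(r - a) * v 3]
  refine ⟨u, ?_, ?_, ?_⟩
  · have : mdot u u = r ^ 2 * ((r + a) * (3 * r - a)) := by
      simp only [mdot, u, neg_sub, Matrix.cons_val_zero, Matrix.cons_val_one, Matrix.cons_val]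
      linear_combination (r - a) ^ 2 * hr
    rw [this]
    exact mul_pos (pow_pos hr0 2) (mul_pos (by linarith) (by linarith))
  · show 0 < 2 * r ^ 2
    positivity
  · have : mdot v u = r ^ 2 * (r + a) := by
      simp only [mdot, u, neg_sub, Matrix.cons_val_zero, Matrix.cons_val_one, Matrix.cons_val]
      linear_combination (a - r) * hr
    rw [this]
    exact mul_pos (pow_pos hr0 2) (by linarith)

/-- x is later than y iff some future-pointing timelike u has (x-y)·u > 0. -/
theorem later_iff_exists_timelike (x y : M4) :
    (∃ u : M4, mdot u u > 0 ∧ u 0 > 0 ∧ mdot (x - y) u > 0) ↔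
    ¬ (mdot (x - y) (x - y) ≥ 0 ∧ x 0 ≤ y 0) := by
  have hv0 : (x - y) 0 = x 0 - y 0 := rfl
  constructor
  · rintro ⟨u, huu, hu0, hvu⟩ ⟨hvv, hxy⟩
    have := mdot_nonpos_of_past_of_future hvv (by linarith) huu.le hu0.le
    linarith
  · intro h
    rcases lt_or_ge (mdot (x - y) (x - y)) 0 with hvv | hvv
    · exact exists_future_timelike_mdot_pos_of_spacelike hvv
    · have hxy : y 0 < x 0 := lt_of_not_ge fun hxy => h ⟨hvv, hxy⟩
      exact exists_future_timelike_mdot_pos_of_time_pos (by linarith)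
end
end

section
/- Let Σ = a + u^⊥ be a spacelike hyperplane, where u is a future-pointing timelike vector and u^⊥ its Minkowski-orthogonal complement. Then an event x satisfies x ≻ Σ (x is later than every point of Σ) if and only if (x − a) · u > 0. -/
/-!
If `w` lies in the closed backward light cone and `u` in the closed forward one, then `w · u ≤ 0`
(reverse Cauchy–Schwarz: the spatial parts satisfy `|u⃗ · w⃗| ≤ |u⃗| |w⃗| ≤ u⁰ (-w⁰)`).
So for `z ∈ Σ` the vector `x - z`, whose product with `u` is `(x - a) · u`, cannot lie in the
backward cone when `(x - a) · u > 0`. Conversely, if `(x - a) · u ≤ 0`, moving from `x` along `u`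
for time `t = -(x - a) · u / u · u ≥ 0` reaches a point of `Σ` whose backward cone contains `x`.
-/

noncomputable section

theorem mdot_nonpos_of_past_of_future_s4 {w u : M4} (hw : 0 ≤ mdot w w) (hw0 : w 0 ≤ 0)
    (hu : 0 ≤ mdot u u) (hu0 : 0 ≤ u 0) : mdot w u ≤ 0 := by
  set s := u 1 * w 1 + u 2 * w 2 + u 3 * w 3
  have hu_spatial : u 1 ^ 2 + u 2 ^ 2 + u 3 ^ 2 ≤ u 0 ^ 2 := by simp only [mdot] at hu; nlinarith
  have hw_spatial : w 1 ^ 2 + w 2 ^ 2 + w 3 ^ 2 ≤ w 0 ^ 2 := by simp only [mdot] at hw; nlinarith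
  have cauchy_schwarz : s ^ 2 ≤ (u 1 ^ 2 + u 2 ^ 2 + u 3 ^ 2) * (w 1 ^ 2 + w 2 ^ 2 + w 3 ^ 2) := by
    nlinarith [sq_nonneg (u 1 * w 2 - u 2 * w 1), sq_nonneg (u 1 * w 3 - u 3 * w 1),
      sq_nonneg (u 2 * w 3 - u 3 * w 2)]
  have hs : s ^ 2 ≤ (u 0 * -w 0) ^ 2 := by
    calc s ^ 2 ≤ (u 1 ^ 2 + u 2 ^ 2 + u 3 ^ 2) * (w 1 ^ 2 + w 2 ^ 2 + w 3 ^ 2) := cauchy_schwarz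
      _ ≤ u 0 ^ 2 * w 0 ^ 2 := mul_le_mul hu_spatial hw_spatial (by positivity) (by positivity)
      _ = (u 0 * -w 0) ^ 2 := by ring
  have hs_lower := (abs_le_of_sq_le_sq' hs (mul_nonneg hu0 (neg_nonneg.2 hw0))).1
  calc mdot w u = w 0 * u 0 - s := by simp only [mdot, s]; ring
    _ ≤ 0 := by linarith

theorem later_of_mdot_sub_pos {x y u : M4} (hu : 0 ≤ mdot u u) (hu0 : 0 ≤ u 0)
    (h : 0 < mdot (x - y) u) : later x y :=
  fun ⟨hcausal, hpast⟩ => (mdot_nonpos_of_past_of_future_s4 hcausal hpast hu hu0).not_gt h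

theorem not_later_add_smul (x u : M4) {t : ℝ} (ht : 0 ≤ t) (hu : 0 ≤ mdot u u) (hu0 : 0 ≤ u 0) :
    ¬ later x (x + t • u) := by
  refine not_not_intro ⟨?_, ?_⟩
  · have : mdot (x - (x + t • u)) (x - (x + t • u)) = t ^ 2 * mdot u u := by
      simp only [mdot, Pi.sub_apply, Pi.add_apply, Pi.smul_apply, smul_eq_mul]; ring
    rw [this]; positivity
  · simp only [Pi.add_apply, Pi.smul_apply, smul_eq_mul, sub_add_cancel_left, neg_nonpos]
    positivity

/-- x is later than a spacelike hyperplane a + u^⊥ iff (x - a)·u > 0. -/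
theorem later_hyperplane_iff (a u x : M4) (hu : mdot u u > 0) (hu0 : u 0 > 0) :
    setLater {x} {z : M4 | mdot (z - a) u = 0} ↔ mdot (x - a) u > 0 := by
  constructor
  · intro h
    by_contra! hxa
    set t := -mdot (x - a) u / mdot u u
    have ht : 0 ≤ t := div_nonneg (neg_nonneg.2 hxa) hu.le
    have hz : mdot (x + t • u - a) u = 0 := by
      have : mdot (x + t • u - a) u = mdot (x - a) u + t * mdot u u := by
        simp only [mdot, Pi.sub_apply, Pi.add_apply, Pi.smul_apply, smul_eq_mul]; ring
      rw [this, div_mul_cancel₀ _ hu.ne']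
      ring
    exact not_later_add_smul x u ht hu.le hu0.le (h x rfl _ hz)
  · intro hxa y hy z hz
    rw [Set.mem_singleton_iff.1 hy]
    have : mdot (x - z) u = mdot (x - a) u - mdot (z - a) u := by
      simp only [mdot, Pi.sub_apply]; ring
    exact later_of_mdot_sub_pos hu.le hu0.le (by rw [this, hz]; linarith)
end
end

section
/- Let R₁, R₂ be subsets of Minkowski space. If there is a spacelike hyperplane Σ = a + u^⊥ (u future-pointing timelike) with R₁ ≻ Σ and Σ ≻ R₂, then R₁ ≻ R₂. -/
/-!
A point `x` later than every point of `Σ = a + u^⊥` lies strictly on the future side of `Σ`,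
i.e. `0 < mdot (x - a) u`: otherwise `x` would be in the closed past cone of its orthogonal
projection onto `Σ`, which differs from `x` by a nonpositive multiple of `u`. Dually every point
`y` earlier than `Σ` has `mdot (y - a) u < 0`. Hence `0 < mdot (x - y) u`, whereas the reverse
Cauchy–Schwarz inequality gives `mdot (x - y) u ≤ 0` as soon as `x - y` is past causal.
-/

noncomputable section

def InClosedPastCone (v : M4) : Prop := mdot v v ≥ 0 ∧ v 0 ≤ 0

lemma later_iff_not_inClosedPastCone {x y : M4} : later x y ↔ ¬ InClosedPastCone (x - y) :=
  Iff.rfl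

lemma mdot_sub_left (x y z : M4) : mdot (x - y) z = mdot x z - mdot y z := by
  simp only [mdot, Pi.sub_apply]; ring

lemma mdot_smul_left (c : ℝ) (x y : M4) : mdot (c • x) y = c * mdot x y := by
  simp only [mdot, Pi.smul_apply, smul_eq_mul]; ring

lemma mdot_smul_right (c : ℝ) (x y : M4) : mdot x (c • y) = c * mdot x y := by
  simp only [mdot, Pi.smul_apply, smul_eq_mul]; ring

lemma smul_inClosedPastCone_iff {u : M4} (hu : 0 ≤ mdot u u) (hu0 : 0 < u 0) (c : ℝ) :
    InClosedPastCone (c • u) ↔ c ≤ 0 := by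
  have hcone : mdot (c • u) (c • u) = c ^ 2 * mdot u u := by
    rw [mdot_smul_left, mdot_smul_right]; ring
  simp only [InClosedPastCone, hcone, Pi.smul_apply, smul_nonpos_iff_nonpos_of_pos_right hu0,
    and_iff_right_iff_imp]
  exact fun _ => by positivity

/-- Reverse Cauchy–Schwarz inequality. -/
lemma mdot_nonpos_of_inClosedPastCone {v u : M4} (hv : InClosedPastCone v)
    (hu : 0 ≤ mdot u u) (hu0 : 0 ≤ u 0) : mdot v u ≤ 0 := by
  obtain ⟨hvv, hv0⟩ := hv
  set s := v 1 * u 1 + v 2 * u 2 + v 3 * u 3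
  set V := v 1 ^ 2 + v 2 ^ 2 + v 3 ^ 2
  set U := u 1 ^ 2 + u 2 ^ 2 + u 3 ^ 2
  have hV : V ≤ v 0 ^ 2 := by unfold mdot at hvv; linarith
  have hU : U ≤ u 0 ^ 2 := by unfold mdot at hu; linarith
  have hspatial : s ^ 2 ≤ (-(v 0 * u 0)) ^ 2 :=
    calc s ^ 2 ≤ V * U := by -- Cauchy–Schwarz in ℝ³, via Lagrange's identity
          nlinarith [sq_nonneg (v 1 * u 2 - v 2 * u 1), sq_nonneg (v 1 * u 3 - v 3 * u 1),
            sq_nonneg (v 2 * u 3 - v 3 * u 2)]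
      _ ≤ v 0 ^ 2 * u 0 ^ 2 := mul_le_mul hV hU (by positivity) (sq_nonneg _)
      _ = (-(v 0 * u 0)) ^ 2 := by ring
  have hs : v 0 * u 0 ≤ s := by
    have := (abs_le_of_sq_le_sq' hspatial
      (neg_nonneg.2 (mul_nonpos_of_nonpos_of_nonneg hv0 hu0))).1
    rwa [neg_neg] at this
  have : mdot v u = v 0 * u 0 - s := by simp only [mdot, s]; ring
  linarith

lemma exists_mem_hyperplane_sub_eq_smul {u : M4} (hu : mdot u u ≠ 0) (a x : M4) :
    ∃ z, mdot (z - a) u = 0 ∧ x - z = (mdot (x - a) u / mdot u u) • u := by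
  refine ⟨x - (mdot (x - a) u / mdot u u) • u, ?_, by abel⟩
  rw [sub_right_comm, mdot_sub_left, mdot_smul_left, div_mul_cancel₀ _ hu, sub_self]

lemma mdot_sub_pos_of_later_hyperplane {a u x : M4} (hu : 0 < mdot u u) (hu0 : 0 < u 0)
    (h : ∀ z, mdot (z - a) u = 0 → later x z) : 0 < mdot (x - a) u := by
  obtain ⟨z, hz, hxz⟩ := exists_mem_hyperplane_sub_eq_smul hu.ne' a x
  have hlater := h z hz
  rwa [later_iff_not_inClosedPastCone, hxz, smul_inClosedPastCone_iff hu.le hu0, not_le,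
    div_pos_iff_of_pos_right hu] at hlater

lemma mdot_sub_neg_of_hyperplane_later {a u y : M4} (hu : 0 < mdot u u) (hu0 : 0 < u 0)
    (h : ∀ z, mdot (z - a) u = 0 → later z y) : mdot (y - a) u < 0 := by
  obtain ⟨z, hz, hyz⟩ := exists_mem_hyperplane_sub_eq_smul hu.ne' a y
  have hlater := h z hz
  rw [later_iff_not_inClosedPastCone, ← neg_sub, hyz, ← neg_smul,
    smul_inClosedPastCone_iff hu.le hu0, not_le, neg_pos] at hlater
  exact neg_of_div_neg_left hlater hu.le

/-- A separating spacelike hyperplane implies posteriority. -/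
theorem separating_hyperplane_later (R₁ R₂ : Set M4) (a u : M4)
    (hu : mdot u u > 0) (hu0 : u 0 > 0)
    (h₁ : setLater R₁ {z : M4 | mdot (z - a) u = 0})
    (h₂ : setLater {z : M4 | mdot (z - a) u = 0} R₂) :
    setLater R₁ R₂ := by
  intro x hx y hy hxy
  have hxa := mdot_sub_pos_of_later_hyperplane hu hu0 (h₁ x hx)
  have hya := mdot_sub_neg_of_hyperplane_later hu hu0 fun z hz => h₂ z hz y hy
  have hxy_u := mdot_nonpos_of_inClosedPastCone hxy hu.le hu0.le
  rw [← sub_sub_sub_cancel_right x y a, mdot_sub_left] at hxy_u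
  linarith
end
end

section
/- Let S = x + ℝ≥0 · e be a string (e a spacelike unit vector, e·e = −1) and let z ∈ ℝ⁴ be an event with z ∉ S. Then either S ≻ {z} or {z} ≻ S, i.e., a string and an event disjoint from it are always comparable. -/
noncomputable section

/-! If `z` is comparable with no point of the string, some point `x + s • e` lies in the closed
past cone of `z` and some point `x + t • e` in its closed future cone. Along the string the
Minkowski square of `z - (x + v • e)` is a quadratic in `v` with leading coefficient
`e · e ≤ 0`, hence concave, so it stays nonnegative between `s` and `t`; and by the
intermediate value theorem the time component of `z - (x + v • e)` vanishes at some `u` there.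
A vector with zero time component and nonnegative Minkowski square is zero, so
`z = x + u • e` with `u ≥ 0`. -/

open Set

lemma quadratic_nonneg_of_mem_uIcc {a b c s t u : ℝ} (hc : c ≤ 0)
    (hs : 0 ≤ a + b * s + c * s ^ 2) (ht : 0 ≤ a + b * t + c * t ^ 2) (hu : u ∈ uIcc s t) :
    0 ≤ a + b * u + c * u ^ 2 := by
  wlog hst : s ≤ t generalizing s t
  · exact this ht hs (uIcc_comm s t ▸ hu) (le_of_not_ge hst)
  obtain ⟨hsu, hut⟩ : s ≤ u ∧ u ≤ t := by rwa [uIcc_of_le hst] at hu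
  rcases hsu.eq_or_lt with rfl | hsu
  · exact hs
  -- `(t - s) q(u) = (t - u) q(s) + (u - s) q(t) - c (u - s) (t - u) (t - s)`
  have key : 0 ≤ (t - s) * (a + b * u + c * u ^ 2) := by
    nlinarith [mul_nonneg (sub_nonneg.2 hut) hs, mul_nonneg (sub_nonneg.2 hsu.le) ht,
      mul_nonneg (mul_nonneg (sub_nonneg.2 hsu.le) (sub_nonneg.2 hut)) (neg_nonneg.2 hc)]
  exact (mul_nonneg_iff_of_pos_left (by linarith)).1 key

lemma mdot_sub_smul_self (w e : M4) (v : ℝ) :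
    mdot (w - v • e) (w - v • e) = mdot w w + -2 * mdot w e * v + mdot e e * v ^ 2 := by
  simp only [mdot, Pi.sub_apply, Pi.smul_apply, smul_eq_mul]
  ring

lemma mdot_sub_self_comm (p q : M4) : mdot (p - q) (p - q) = mdot (q - p) (q - p) := by
  simp only [mdot, Pi.sub_apply]
  ring

lemma eq_zero_of_mdot_self_nonneg_of_time_eq_zero {v : M4} (hv : 0 ≤ mdot v v) (h0 : v 0 = 0) :
    v = 0 := by
  simp only [mdot, h0] at hv
  have h1 : v 1 = 0 := by nlinarith [sq_nonneg (v 1), sq_nonneg (v 2), sq_nonneg (v 3)]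
  have h2 : v 2 = 0 := by nlinarith [sq_nonneg (v 1), sq_nonneg (v 2), sq_nonneg (v 3)]
  have h3 : v 3 = 0 := by nlinarith [sq_nonneg (v 1), sq_nonneg (v 2), sq_nonneg (v 3)]
  funext i
  fin_cases i <;> assumption

lemma not_later_iff {p q : M4} : ¬ later p q ↔ 0 ≤ mdot (q - p) (q - p) ∧ p 0 ≤ q 0 := by
  rw [later, not_not, mdot_sub_self_comm, ge_iff_le, sub_nonpos]

lemma mdot_self_nonneg_of_mem_uIcc {x e z : M4} (he : mdot e e ≤ 0) {s t u : ℝ}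
    (hs : 0 ≤ mdot (z - (x + s • e)) (z - (x + s • e)))
    (ht : 0 ≤ mdot (z - (x + t • e)) (z - (x + t • e))) (hu : u ∈ uIcc s t) :
    0 ≤ mdot (z - (x + u • e)) (z - (x + u • e)) := by
  simp only [← sub_sub, mdot_sub_smul_self] at hs ht ⊢
  exact quadratic_nonneg_of_mem_uIcc he hs ht hu

lemma mem_mstring_of_not_later_of_not_later {x e z : M4} (he : mdot e e ≤ 0) {s t : ℝ}
    (hs : 0 ≤ s) (ht : 0 ≤ t) (hpast : ¬ later (x + s • e) z) (hfuture : ¬ later z (x + t • e)) :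
    z ∈ mstring x e := by
  rw [not_later_iff] at hpast hfuture
  rw [mdot_sub_self_comm] at hfuture
  have htime : ContinuousOn (fun v : ℝ ↦ (x + v • e) 0) (uIcc s t) := by fun_prop
  obtain ⟨u, hu, hu0⟩ : z 0 ∈ (fun v : ℝ ↦ (x + v • e) 0) '' uIcc s t :=
    intermediate_value_uIcc htime (mem_uIcc.2 (Or.inl ⟨hpast.2, hfuture.2⟩))
  have hcausal := mdot_self_nonneg_of_mem_uIcc he hpast.1 hfuture.1 hu
  have hzero := eq_zero_of_mdot_self_nonneg_of_time_eq_zero hcausal (by simp [hu0])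
  refine ⟨u, ?_, sub_eq_zero.1 hzero⟩
  rcases mem_uIcc.1 hu with ⟨hsu, -⟩ | ⟨htu, -⟩ <;> linarith

/-- A string and an event disjoint from it are always comparable. -/
theorem string_event_comparable (x e z : M4) (he : mdot e e = -1)
    (hz : z ∉ mstring x e) :
    setLater (mstring x e) {z} ∨ setLater {z} (mstring x e) := by
  by_contra! hcomp
  simp only [setLater, not_forall] at hcomp
  obtain ⟨⟨_, ⟨s, hs, rfl⟩, _, rfl, hpast⟩, ⟨_, rfl, _, ⟨t, ht, rfl⟩, hfuture⟩⟩ := hcomp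
  exact hz (mem_mstring_of_not_later_of_not_later (by linarith) hs ht hpast hfuture)
end
end

section
/- Weak transitivity for two strings and an event: let S₁, S₂ be strings and x an event with x ∉ S₁ ∪ S₂. If S₁ ≻ S₂ and it is not the case that {x} ≻ S₂, then S₁ ≻ {x}. -/
/-!
The closed past cone `{u | mdot u u ≥ 0, u 0 ≤ 0}` is closed under addition (by the reverse
Cauchy–Schwarz inequality), so the negation of `later` is transitive. Hence if `x` lies in the
closed past of some `y ∈ S₂` and a point `p ∈ S₁` lay in the closed past of `x`, then `p` would
lie in the closed past of `y`, contradicting `S₁ ≻ S₂`.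
-/

noncomputable section

def pastCone : Set M4 := {u | 0 ≤ mdot u u ∧ u 0 ≤ 0}

theorem mdot_nonneg_of_mem_pastCone {u v : M4} (hu : u ∈ pastCone) (hv : v ∈ pastCone) :
    0 ≤ mdot u v := by
  obtain ⟨hu, hu0⟩ := hu
  obtain ⟨hv, hv0⟩ := hv
  simp only [mdot] at *
  have htime : 0 ≤ u 0 * v 0 := mul_nonneg_of_nonpos_of_nonpos hu0 hv0
  -- Lagrange's identity: (u⃗·v⃗)² ≤ |u⃗|² |v⃗|² ≤ (u 0 v 0)².
  have hcs : (u 1 * v 1 + u 2 * v 2 + u 3 * v 3) ^ 2 ≤ (u 0 * v 0) ^ 2 := by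
    nlinarith [sq_nonneg (u 1 * v 2 - u 2 * v 1), sq_nonneg (u 1 * v 3 - u 3 * v 1),
      sq_nonneg (u 2 * v 3 - u 3 * v 2), mul_nonneg hu hv]
  nlinarith [abs_le_of_sq_le_sq' hcs htime]

theorem mdot_add_self (u v : M4) :
    mdot (u + v) (u + v) = mdot u u + 2 * mdot u v + mdot v v := by
  simp only [mdot, Pi.add_apply]
  ring

theorem add_mem_pastCone {u v : M4} (hu : u ∈ pastCone) (hv : v ∈ pastCone) :
    u + v ∈ pastCone := by
  refine ⟨?_, by simpa using add_nonpos hu.2 hv.2⟩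
  rw [mdot_add_self]
  linarith [hu.1, hv.1, mdot_nonneg_of_mem_pastCone hu hv]

theorem later_iff_sub_not_mem_pastCone {x y : M4} : later x y ↔ x - y ∉ pastCone := by
  simp [later, pastCone, ge_iff_le]

theorem not_later_trans {x y z : M4} (hxy : ¬ later x y) (hyz : ¬ later y z) :
    ¬ later x z := by
  rw [later_iff_sub_not_mem_pastCone, not_not] at hxy hyz ⊢
  simpa using add_mem_pastCone hxy hyz

theorem setLater_singleton_of_not_setLater {R S : Set M4} {x : M4} (hRS : setLater R S)
    (hxS : ¬ setLater {x} S) : setLater R {x} := by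
  obtain ⟨y, hy, hxy⟩ : ∃ y ∈ S, ¬ later x y := by
    simpa [setLater] using hxS
  rintro p hp _ rfl
  by_contra hpx
  exact not_later_trans hpx hxy (hRS p hp y hy)

theorem weak_transitivity_general (x₁ e₁ x₂ e₂ x : M4)
    (h12 : setLater (mstring x₁ e₁) (mstring x₂ e₂))
    (hx2 : ¬ setLater {x} (mstring x₂ e₂)) :
    setLater (mstring x₁ e₁) {x} :=
  setLater_singleton_of_not_setLater h12 hx2

/-- Weak transitivity for two strings and an event. -/
theorem weak_transitivity (x₁ e₁ x₂ e₂ x : M4)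
    (he₁ : mdot e₁ e₁ = -1) (he₂ : mdot e₂ e₂ = -1)
    (hx : x ∉ mstring x₁ e₁ ∪ mstring x₂ e₂)
    (h12 : setLater (mstring x₁ e₁) (mstring x₂ e₂))
    (hx2 : ¬ setLater {x} (mstring x₂ e₂)) :
    setLater (mstring x₁ e₁) {x} :=
  weak_transitivity_general x₁ e₁ x₂ e₂ x h12 hx2
end
end

section
/- Two disjoint strings contained in a common spacelike 2-plane are spacelike separated: if e, e' are spacelike unit vectors whose span is spacelike (every nonzero vector in span{e,e'} is spacelike), and the strings S(x,e), S(x',e') are disjoint with x' − x ∈ span{e,e'}, then every point of S(x,e) is spacelike separated from every point of S(x',e'). -/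
noncomputable section

theorem sub_mem_span_of_mem_mstring {x e z : M4} (hz : z ∈ mstring x e) :
    z - x ∈ Submodule.span ℝ {e} := by
  obtain ⟨s, -, rfl⟩ := hz
  simpa using Submodule.smul_mem _ s (Submodule.mem_span_singleton_self e)

theorem sub_mem_span_pair_of_mem_mstring {x x' e e' z z' : M4}
    (hz : z ∈ mstring x e) (hz' : z' ∈ mstring x' e')
    (hplane : x' - x ∈ Submodule.span ℝ {e, e'}) :
    z - z' ∈ Submodule.span ℝ {e, e'} := by
  have hze : z - x ∈ Submodule.span ℝ {e, e'} :=
    Submodule.span_mono (by simp) (sub_mem_span_of_mem_mstring hz)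
  have hze' : z' - x' ∈ Submodule.span ℝ {e, e'} :=
    Submodule.span_mono (by simp) (sub_mem_span_of_mem_mstring hz')
  have hsplit : z - z' = (z - x) - (z' - x') - (x' - x) := by abel
  rw [hsplit]
  exact sub_mem (sub_mem hze hze') hplane

theorem strings_in_spacelike_plane_general (x x' e e' : M4)
    (hspan : ∀ v ∈ Submodule.span ℝ {e, e'}, v ≠ 0 → mdot v v < 0)
    (hdisj : mstring x e ∩ mstring x' e' = ∅)
    (hplane : x' - x ∈ Submodule.span ℝ {e, e'}) :
    ∀ z ∈ mstring x e, ∀ z' ∈ mstring x' e', mdot (z - z') (z - z') < 0 := by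
  intro z hz z' hz'
  have hne : z ≠ z' := (Set.disjoint_iff_inter_eq_empty.mpr hdisj).ne_of_mem hz hz'
  exact hspan _ (sub_mem_span_pair_of_mem_mstring hz hz' hplane) (sub_ne_zero.mpr hne)

/-- Two disjoint strings in a common spacelike 2-plane are spacelike separated. -/
theorem strings_in_spacelike_plane (x x' e e' : M4)
    (he : mdot e e = -1) (he' : mdot e' e' = -1)
    (hspan : ∀ v ∈ Submodule.span ℝ {e, e'}, v ≠ 0 → mdot v v < 0)
    (hdisj : mstring x e ∩ mstring x' e' = ∅)
    (hplane : x' - x ∈ Submodule.span ℝ {e, e'}) :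
    ∀ z ∈ mstring x e, ∀ z' ∈ mstring x' e', mdot (z - z') (z - z') < 0 :=
  strings_in_spacelike_plane_general x x' e e' hspan hdisj hplane
end
end
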